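/- arXiv:2311.14168 — 2 statements merged into one kernel-verified Lean document; each statement's English description precedes it below -/
import Mathlib

section
/- (Lower bound for the regularized cost.) Set M_τ := (τk/(2(1−γ)))·log(σ_min(R)/(πτ)). Then for every stable K ∈ ℝ^{k×n} and every symmetric positive definite Σ ∈ ℝ^{k×k}, C(K,Σ) ≥ ( μ + (γ/(1−γ))σ_min(W) )·‖P_K‖ + M_τ. -/
/-!
`P_K` is a sum of positive semidefinite matrices (`tsum` is `0` if the series diverges), so it is
positive semidefinite and `‖P_K‖ ≤ Tr P_K`. A positive semidefinite `Z` satisfies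
`σ_min(Z) • 1 ≤ Z`, hence `σ_min(Z) ‖P_K‖ ≤ σ_min(Z) Tr P_K ≤ Tr (Z P_K)`; this bounds the `D₀` and
`W` terms. For the entropy term put `M = R + γ BᵀP_K B ≥ σ_min(R) • 1`. Applying
`log det X ≤ Tr X - k` to `X = (2/τ) Σ^{1/2} M Σ^{1/2}` gives
`Tr (Σ M) - (τ/2)(k + log ((2π)^k det Σ)) ≥ (τ/2) log det (M / (πτ))`,
and `det M ≥ σ_min(R)^k`.
-/

open Matrix


noncomputable def spec {m l : ℕ} (M : Matrix (Fin m) (Fin l) ℝ) : ℝ :=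
  ‖LinearMap.toContinuousLinearMap (Matrix.toEuclideanLin M)‖

noncomputable def sigMin {m l : ℕ} (M : Matrix (Fin m) (Fin l) ℝ) : ℝ :=
  sInf {r : ℝ | ∃ x : EuclideanSpace ℝ (Fin l), ‖x‖ = 1 ∧
    r = ‖LinearMap.toContinuousLinearMap (Matrix.toEuclideanLin M) x‖}

noncomputable def frob {m l : ℕ} (M : Matrix (Fin m) (Fin l) ℝ) : ℝ :=
  Real.sqrt (Matrix.trace (Mᵀ * M))

def loewner {m : ℕ} (X Y : Matrix (Fin m) (Fin m) ℝ) : Prop :=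
  (Y - X).PosSemidef

noncomputable def Pmat {n k : ℕ} (γ : ℝ) (A : Matrix (Fin n) (Fin n) ℝ)
    (B : Matrix (Fin n) (Fin k) ℝ) (Q : Matrix (Fin n) (Fin n) ℝ)
    (R : Matrix (Fin k) (Fin k) ℝ) (K : Matrix (Fin k) (Fin n) ℝ) :
    Matrix (Fin n) (Fin n) ℝ :=
  ∑' t : ℕ, γ ^ t • (((A - B * K)ᵀ) ^ t * (Q + Kᵀ * R * K) * (A - B * K) ^ t)

noncomputable def Emat {n k : ℕ} (γ : ℝ) (A : Matrix (Fin n) (Fin n) ℝ)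
    (B : Matrix (Fin n) (Fin k) ℝ) (Q : Matrix (Fin n) (Fin n) ℝ)
    (R : Matrix (Fin k) (Fin k) ℝ) (K : Matrix (Fin k) (Fin n) ℝ) :
    Matrix (Fin k) (Fin n) ℝ :=
  -(γ • (Bᵀ * Pmat γ A B Q R K * (A - B * K))) + R * K

noncomputable def Smat {n k : ℕ} (γ : ℝ) (A : Matrix (Fin n) (Fin n) ℝ)
    (B : Matrix (Fin n) (Fin k) ℝ) (W : Matrix (Fin n) (Fin n) ℝ)
    (D₀ : Matrix (Fin n) (Fin n) ℝ) (K : Matrix (Fin k) (Fin n) ℝ)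
    (Sg : Matrix (Fin k) (Fin k) ℝ) : Matrix (Fin n) (Fin n) ℝ :=
  ∑' t : ℕ, γ ^ t •
    ((A - B * K) ^ t * D₀ * ((A - B * K)ᵀ) ^ t +
      ∑ s ∈ Finset.Icc 1 t,
        (A - B * K) ^ (t - s) * (B * Sg * Bᵀ + W) * ((A - B * K)ᵀ) ^ (t - s))

noncomputable def Cost {n k : ℕ} (γ τ : ℝ) (A : Matrix (Fin n) (Fin n) ℝ)
    (B : Matrix (Fin n) (Fin k) ℝ) (Q : Matrix (Fin n) (Fin n) ℝ)
    (R : Matrix (Fin k) (Fin k) ℝ) (W : Matrix (Fin n) (Fin n) ℝ)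
    (D₀ : Matrix (Fin n) (Fin n) ℝ) (K : Matrix (Fin k) (Fin n) ℝ)
    (Sg : Matrix (Fin k) (Fin k) ℝ) : ℝ :=
  Matrix.trace (D₀ * Pmat γ A B Q R K) +
    (1 / (1 - γ)) *
      (Matrix.trace (Sg * (R + γ • (Bᵀ * Pmat γ A B Q R K * B))) -
        (τ / 2) * ((k : ℝ) + Real.log ((2 * Real.pi) ^ k * Sg.det)) +
        γ * Matrix.trace (W * Pmat γ A B Q R K))

noncomputable def fent {n k : ℕ} (γ τ : ℝ) (A : Matrix (Fin n) (Fin n) ℝ)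
    (B : Matrix (Fin n) (Fin k) ℝ) (Q : Matrix (Fin n) (Fin n) ℝ)
    (R : Matrix (Fin k) (Fin k) ℝ) (K : Matrix (Fin k) (Fin n) ℝ)
    (Sg : Matrix (Fin k) (Fin k) ℝ) : ℝ :=
  (τ / (2 * (1 - γ))) * Real.log Sg.det -
    (1 / (1 - γ)) * Matrix.trace (Sg * (R + γ • (Bᵀ * Pmat γ A B Q R K * B)))

open scoped MatrixOrder

namespace Matrix

section Real

variable {ι : Type*} [Fintype ι]

lemma posSemidef_tsum {β : Type*} {f : β → Matrix ι ι ℝ} (hf : ∀ t, (f t).PosSemidef) :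
    (∑' t, f t).PosSemidef := by
  by_cases h : Summable f
  · refine .of_dotProduct_mulVec_nonneg ?_ fun y => ?_
    · rw [IsHermitian, conjTranspose_tsum]
      exact tsum_congr fun t => (hf t).isHermitian.eq
    · let q : Matrix ι ι ℝ →+ ℝ :=
        AddMonoidHom.mk' (fun M => star y ⬝ᵥ (M *ᵥ y)) fun M N => by
          rw [add_mulVec, dotProduct_add]
      have hq : Continuous q := by
        show Continuous fun M : Matrix ι ι ℝ => star y ⬝ᵥ (M *ᵥ y)
        fun_prop
      rw [show star y ⬝ᵥ ((∑' t, f t) *ᵥ y) = q (∑' t, f t) from rfl, h.map_tsum q hq]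
      exact tsum_nonneg fun t => (hf t).dotProduct_mulVec_nonneg y
  · simpa [tsum_eq_zero_of_not_summable h] using PosSemidef.zero

variable [DecidableEq ι]

lemma IsHermitian.smul_one_le_iff {X : Matrix ι ι ℝ} (hX : X.IsHermitian) {c : ℝ} :
    c • (1 : Matrix ι ι ℝ) ≤ X ↔ ∀ i, c ≤ hX.eigenvalues i := by
  rw [← Algebra.algebraMap_eq_smul_one, algebraMap_le_iff_le_spectrum (R := ℝ) hX,
    hX.spectrum_real_eq_range_eigenvalues, Set.forall_mem_range]

lemma IsHermitian.pow_card_le_det {X : Matrix ι ι ℝ} (hX : X.IsHermitian) {c : ℝ} (hc : 0 ≤ c)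
    (h : c • (1 : Matrix ι ι ℝ) ≤ X) : c ^ Fintype.card ι ≤ X.det := by
  simp only [hX.det_eq_prod_eigenvalues, RCLike.ofReal_real_eq_id, id]
  calc c ^ Fintype.card ι = ∏ _i : ι, c := by simp
    _ ≤ _ := Finset.prod_le_prod (fun _ _ => hc) fun i _ => hX.smul_one_le_iff.1 h i

lemma PosSemidef.trace_mul_nonneg {X Y : Matrix ι ι ℝ} (hX : X.PosSemidef) (hY : Y.PosSemidef) :
    0 ≤ (X * Y).trace := by
  have hsqrt : CFC.sqrt X * CFC.sqrt X = X := CFC.sqrt_mul_sqrt_self X hX.nonneg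
  have h := (hY.mul_mul_conjTranspose_same (CFC.sqrt X)).trace_nonneg
  rwa [(CFC.sqrt_nonneg X).posSemidef.isHermitian.eq, trace_mul_cycle, hsqrt] at h

lemma PosDef.log_det_le_trace_sub_card {X : Matrix ι ι ℝ} (hX : X.PosDef) :
    Real.log X.det ≤ X.trace - Fintype.card ι := by
  rw [hX.isHermitian.det_eq_prod_eigenvalues, hX.isHermitian.trace_eq_sum_eigenvalues]
  simp only [RCLike.ofReal_real_eq_id, id]
  rw [Real.log_prod fun i _ => (hX.eigenvalues_pos i).ne']
  calc ∑ i, Real.log (hX.isHermitian.eigenvalues i) ≤ ∑ i, (hX.isHermitian.eigenvalues i - 1) :=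
        Finset.sum_le_sum fun i _ => Real.log_le_sub_one_of_pos (hX.eigenvalues_pos i)
    _ = _ := by simp [Finset.sum_sub_distrib]

lemma PosDef.log_det_add_log_det_le {S M : Matrix ι ι ℝ} (hS : S.PosDef) (hM : M.PosDef) :
    Real.log S.det + Real.log M.det ≤ (S * M).trace - Fintype.card ι := by
  set G := CFC.sqrt S
  have hGG : G * G = S := CFC.sqrt_mul_sqrt_self S hS.posSemidef.nonneg
  have hGH : Gᴴ = G := (CFC.sqrt_nonneg S).posSemidef.isHermitian.eq
  have hG : IsUnit G := isUnit_of_mul_isUnit_left (hGG ▸ hS.isUnit)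
  have h :=
    (hM.conjTranspose_mul_mul_same (mulVec_injective_iff_isUnit.2 hG)).log_det_le_trace_sub_card
  rwa [hGH, det_mul, det_mul, mul_comm (G.det * M.det), ← mul_assoc, ← det_mul, hGG,
    trace_mul_cycle, hGG, Real.log_mul hS.det_pos.ne' hM.det_pos.ne'] at h

/-- The left side is the minimum of the right side over `S`, attained at `S = (τ / 2) • M⁻¹`. -/
lemma PosDef.le_trace_mul_sub_entropy {S M : Matrix ι ι ℝ} (hS : S.PosDef) (hM : M.PosDef)
    {τ : ℝ} (hτ : 0 < τ) :
    τ / 2 * (Real.log M.det - Fintype.card ι * Real.log (Real.pi * τ)) ≤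
      (S * M).trace -
        τ / 2 * (Fintype.card ι + Real.log ((2 * Real.pi) ^ Fintype.card ι * S.det)) := by
  have h := hS.log_det_add_log_det_le (hM.smul (by positivity : 0 < 2 / τ))
  rw [det_smul, Matrix.mul_smul, trace_smul, smul_eq_mul,
    Real.log_mul (by positivity) hM.det_pos.ne', Real.log_pow, Real.log_div two_ne_zero hτ.ne'] at h
  rw [Real.log_mul (by positivity) hS.det_pos.ne', Real.log_pow,
    Real.log_mul two_ne_zero Real.pi_pos.ne', Real.log_mul Real.pi_pos.ne' hτ.ne']
  have hτ2 : τ / 2 * (2 / τ * (S * M).trace) = (S * M).trace := by field_simp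
  linear_combination τ / 2 * h + hτ2

end Real

section Fin

variable {m l : ℕ}

lemma sigMin_nonneg (X : Matrix (Fin m) (Fin l) ℝ) : 0 ≤ sigMin X :=
  Real.sInf_nonneg <| by rintro _ ⟨x, -, rfl⟩; exact norm_nonneg _

lemma sigMin_le_norm_toEuclideanLin (X : Matrix (Fin m) (Fin l) ℝ)
    {x : EuclideanSpace ℝ (Fin l)} (hx : ‖x‖ = 1) : sigMin X ≤ ‖toEuclideanLin X x‖ :=
  csInf_le ⟨0, by rintro _ ⟨x, -, rfl⟩; exact norm_nonneg _⟩ ⟨x, hx, rfl⟩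

lemma sigMin_pos [Nonempty (Fin l)] {X : Matrix (Fin m) (Fin l) ℝ}
    (hX : Function.Injective X.mulVec) : 0 < sigMin X := by
  have hinj : Function.Injective (toEuclideanLin X) := fun x y hxy =>
    WithLp.ofLp_injective 2 <| hX <| by simpa [toLpLin_apply] using congrArg WithLp.ofLp hxy
  obtain ⟨C, hC, hanti⟩ := (LinearMap.injective_iff_antilipschitz _).1 hinj
  obtain ⟨x, hx⟩ : ∃ x : EuclideanSpace ℝ (Fin l), ‖x‖ = 1 :=
    ⟨EuclideanSpace.single (Classical.arbitrary _) 1, by simp⟩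
  refine (inv_pos.2 (NNReal.coe_pos.2 hC)).trans_le (le_csInf ⟨_, x, hx, rfl⟩ ?_)
  rintro _ ⟨y, hy, rfl⟩
  have h := hanti.le_mul_dist y 0
  simp only [dist_zero_right, map_zero, hy] at h
  exact (inv_le_iff_one_le_mul₀' (by exact_mod_cast hC)).2 h

lemma PosSemidef.sigMin_le_eigenvalues {X : Matrix (Fin m) (Fin m) ℝ} (hX : X.PosSemidef)
    (i : Fin m) : sigMin X ≤ hX.isHermitian.eigenvalues i := by
  have hv := hX.isHermitian.eigenvectorBasis.orthonormal.1 i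
  convert sigMin_le_norm_toEuclideanLin X hv
  rw [toLpLin_apply, hX.isHermitian.mulVec_eigenvectorBasis]
  simp [norm_smul, hv, abs_of_nonneg (hX.eigenvalues_nonneg i)]

lemma PosSemidef.sigMin_smul_one_le {X : Matrix (Fin m) (Fin m) ℝ} (hX : X.PosSemidef) :
    sigMin X • (1 : Matrix (Fin m) (Fin m) ℝ) ≤ X :=
  hX.isHermitian.smul_one_le_iff.2 hX.sigMin_le_eigenvalues

open scoped Matrix.Norms.L2Operator in
lemma IsHermitian.spec_le_of_abs_eigenvalues_le {X : Matrix (Fin m) (Fin m) ℝ}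
    (hX : X.IsHermitian) {c : ℝ} (hc : 0 ≤ c) (h : ∀ i, |hX.eigenvalues i| ≤ c) :
    spec X ≤ c := by
  have hcfc := norm_cfc_le (f := id) (a := X) hc (by
    rw [hX.spectrum_real_eq_range_eigenvalues]
    rintro _ ⟨i, rfl⟩
    exact h i)
  rwa [cfc_id ℝ X hX.isSelfAdjoint, l2_opNorm_def] at hcfc

lemma PosSemidef.spec_le_trace {X : Matrix (Fin m) (Fin m) ℝ} (hX : X.PosSemidef) :
    spec X ≤ X.trace := by
  refine hX.isHermitian.spec_le_of_abs_eigenvalues_le hX.trace_nonneg fun i => ?_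
  rw [abs_of_nonneg (hX.eigenvalues_nonneg i), hX.isHermitian.trace_eq_sum_eigenvalues]
  simpa using Finset.single_le_sum (fun j _ => hX.eigenvalues_nonneg j) (Finset.mem_univ i)

lemma PosSemidef.sigMin_mul_spec_le_trace_mul {Z P : Matrix (Fin m) (Fin m) ℝ}
    (hZ : Z.PosSemidef) (hP : P.PosSemidef) : sigMin Z * spec P ≤ (Z * P).trace := by
  have h := PosSemidef.trace_mul_nonneg hZ.sigMin_smul_one_le hP
  rw [sub_mul, trace_sub, smul_mul_assoc, one_mul, trace_smul, smul_eq_mul, sub_nonneg] at h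
  exact (mul_le_mul_of_nonneg_left hP.spec_le_trace (sigMin_nonneg Z)).trans h

lemma PosDef.log_sigMin_le_trace_mul_sub_entropy [Nonempty (Fin m)]
    {R M S : Matrix (Fin m) (Fin m) ℝ} (hR : R.PosDef) (hRM : R ≤ M) (hS : S.PosDef)
    {τ : ℝ} (hτ : 0 < τ) :
    τ * m / 2 * Real.log (sigMin R / (Real.pi * τ)) ≤
      (S * M).trace - τ / 2 * (m + Real.log ((2 * Real.pi) ^ m * S.det)) := by
  have hM : M.PosDef := by simpa using hR.add_posSemidef hRM
  have hσR : 0 < sigMin R := sigMin_pos (mulVec_injective_iff_isUnit.2 hR.isUnit)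
  have hdet : sigMin R ^ m ≤ M.det := by
    simpa using hM.isHermitian.pow_card_le_det (sigMin_nonneg R)
      (hR.posSemidef.sigMin_smul_one_le.trans hRM)
  have hlog : m * Real.log (sigMin R) ≤ Real.log M.det := by
    rw [← Real.log_pow]
    exact Real.log_le_log (pow_pos hσR m) hdet
  have h := hS.le_trace_mul_sub_entropy hM hτ
  rw [Fintype.card_fin] at h
  rw [Real.log_div hσR.ne' (by positivity)]
  linear_combination h + τ / 2 * hlog

end Fin

end Matrix

lemma posSemidef_Pmat {n k : ℕ} {γ : ℝ} (hγ : 0 ≤ γ) {A : Matrix (Fin n) (Fin n) ℝ}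
    {B : Matrix (Fin n) (Fin k) ℝ} {Q : Matrix (Fin n) (Fin n) ℝ} (hQ : Q.PosSemidef)
    {R : Matrix (Fin k) (Fin k) ℝ} (hR : R.PosSemidef) {K : Matrix (Fin k) (Fin n) ℝ} :
    (Pmat γ A B Q R K).PosSemidef := by
  have hN : (Q + Kᵀ * R * K).PosSemidef := hQ.add (hR.conjTranspose_mul_mul_same K)
  refine posSemidef_tsum fun t => .smul ?_ (pow_nonneg hγ t)
  rw [← transpose_pow]
  exact hN.conjTranspose_mul_mul_same _

theorem stmt8_general (n k : ℕ) (hk : 0 < k)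
    (γ τ : ℝ) (hγ0 : 0 < γ) (hγ1 : γ < 1) (hτ : 0 < τ)
    (A : Matrix (Fin n) (Fin n) ℝ) (B : Matrix (Fin n) (Fin k) ℝ)
    (Q : Matrix (Fin n) (Fin n) ℝ) (hQ : Q.PosSemidef)
    (R : Matrix (Fin k) (Fin k) ℝ) (hR : R.PosDef)
    (W : Matrix (Fin n) (Fin n) ℝ) (hW : W.PosSemidef)
    (D₀ : Matrix (Fin n) (Fin n) ℝ) (hD₀ : D₀.PosSemidef)
    (K : Matrix (Fin k) (Fin n) ℝ)
    (Sg : Matrix (Fin k) (Fin k) ℝ) (hSg : Sg.PosDef) :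
    (sigMin D₀ + (γ / (1 - γ)) * sigMin W) * spec (Pmat γ A B Q R K) +
        (τ * k / (2 * (1 - γ))) * Real.log (sigMin R / (Real.pi * τ)) ≤
      Cost γ τ A B Q R W D₀ K Sg := by
  have : Nonempty (Fin k) := Fin.pos_iff_nonempty.1 hk
  set P := Pmat γ A B Q R K
  have hP : P.PosSemidef := posSemidef_Pmat hγ0.le hQ hR.posSemidef
  have hBPB : (γ • (Bᵀ * P * B)).PosSemidef := (hP.conjTranspose_mul_mul_same B).smul hγ0.le
  have hent := hR.log_sigMin_le_trace_mul_sub_entropy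
    (le_add_of_nonneg_right hBPB.nonneg) hSg hτ
  have hD := hD₀.sigMin_mul_spec_le_trace_mul hP
  have hWP := hW.sigMin_mul_spec_le_trace_mul hP
  have h1γ : 0 < 1 - γ := sub_pos.2 hγ1
  calc _ = sigMin D₀ * spec P + 1 / (1 - γ) *
        (τ * k / 2 * Real.log (sigMin R / (Real.pi * τ)) + γ * (sigMin W * spec P)) := by
        field_simp
        ring
    _ ≤ _ := by
      rw [Cost]
      gcongr

/-- Lower bound for the regularized cost: `C(K,Σ) ≥ (μ + γ/(1−γ)·σ_min(W))·‖P_K‖ + M_τ`. -/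
theorem stmt8 (n k : ℕ) (hn : 0 < n) (hk : 0 < k)
    (γ τ : ℝ) (hγ0 : 0 < γ) (hγ1 : γ < 1) (hτ : 0 < τ)
    (A : Matrix (Fin n) (Fin n) ℝ) (B : Matrix (Fin n) (Fin k) ℝ)
    (Q : Matrix (Fin n) (Fin n) ℝ) (hQ : Q.PosSemidef)
    (R : Matrix (Fin k) (Fin k) ℝ) (hR : R.PosDef)
    (W : Matrix (Fin n) (Fin n) ℝ) (hW : W.PosSemidef)
    (D₀ : Matrix (Fin n) (Fin n) ℝ) (hD₀ : D₀.PosSemidef) (hμ : 0 < sigMin D₀)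
    (K : Matrix (Fin k) (Fin n) ℝ) (hK : spec (A - B * K) < 1 / Real.sqrt γ)
    (Sg : Matrix (Fin k) (Fin k) ℝ) (hSg : Sg.PosDef) :
    (sigMin D₀ + (γ / (1 - γ)) * sigMin W) * spec (Pmat γ A B Q R K) +
        (τ * k / (2 * (1 - γ))) * Real.log (sigMin R / (Real.pi * τ)) ≤
      Cost γ τ A B Q R W D₀ K Sg :=
  stmt8_general n k hk γ τ hγ0 hγ1 hτ A B Q hQ R hR W hW D₀ hD₀ K Sg hSg
end

section
/- (Bound on the one-step gain update of IPO.) Suppose K* ∈ ℝ^{k×n} is stable and satisfies K* = γ(R + γBᵀP_{K*}B)⁻¹BᵀP_{K*}A (equivalently E_{K*} = 0). Let K ∈ ℝ^{k×n} be stable and define K' := K − (R + γBᵀP_K B)⁻¹E_K. Then ‖K' − K*‖ ≤ ( 1 + ‖γBᵀP_{K*}B + R‖/σ_min(R) )·‖K − K*‖ + (γ/σ_min(R))·( ‖B‖‖A‖ + ‖B‖²‖K‖ )·‖P_K − P_{K*}‖. -/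
open Matrix


/-! The fixed-point equation says `M⋆ K⋆ = γ Bᵀ P⋆ A` with `M⋆ = R + γ Bᵀ P⋆ B`, hence
`E_K = M⋆ (K - K⋆) - γ Bᵀ (P_K - P⋆) (A - B K)` and so
`K' - K⋆ = (K - K⋆) - M_K⁻¹ M⋆ (K - K⋆) + γ M_K⁻¹ Bᵀ (P_K - P⋆) (A - B K)`. The bound follows
from submultiplicativity of the spectral norm once `‖M_K⁻¹‖ ≤ 1 / σ_min(R)`. That holds because
`P_K ⪰ 0` (a convergent series of congruences of `Q + Kᵀ R K`) makes `M_K ⪰ R`, and for `R ⪰ 0` the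
least singular value is the least eigenvalue, the infimum of the Rayleigh quotient. -/

open scoped Matrix.Norms.L2Operator RealInnerProductSpace

theorem spec_eq_norm {m l : ℕ} (M : Matrix (Fin m) (Fin l) ℝ) : spec M = ‖M‖ := rfl

theorem mul_sq_lt_one_of_lt_one_div_sqrt {γ x : ℝ} (hγ : 0 < γ) (hx₀ : 0 ≤ x)
    (hx : x < 1 / √γ) : γ * x ^ 2 < 1 := by
  rw [lt_div_iff₀ (Real.sqrt_pos.2 hγ)] at hx
  calc γ * x ^ 2 = (x * √γ) ^ 2 := by rw [mul_pow, Real.sq_sqrt hγ.le, mul_comm]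
    _ < 1 := pow_lt_one₀ (by positivity) hx two_ne_zero

theorem LinearMap.IsSymmetric.exists_eigenvector_mul_sq_norm_le_inner {E : Type*}
    [NormedAddCommGroup E] [InnerProductSpace ℝ E] [FiniteDimensional ℝ E] [Nontrivial E]
    {T : E →ₗ[ℝ] E} (hT : T.IsSymmetric) :
    ∃ (μ : ℝ) (x : E), ‖x‖ = 1 ∧ T x = μ • x ∧ ∀ v, μ * ‖v‖ ^ 2 ≤ ⟪T v, v⟫ := by
  set μ := ⨅ y : {y : E // y ≠ 0}, ⟪T y, y⟫ / ‖(y : E)‖ ^ 2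
  obtain ⟨x, hx⟩ := hT.hasEigenvalue_iInf_of_finiteDimensional.exists_hasEigenvector
  have hTx : T x = μ • x := hx.apply_eq_smul
  refine ⟨μ, ‖x‖⁻¹ • x, norm_smul_inv_norm hx.2, ?_, fun v => ?_⟩
  · rw [map_smul, hTx, smul_comm]
  rcases eq_or_ne v 0 with rfl | hv
  · simp
  have hbdd : BddBelow (Set.range fun y : {y : E // y ≠ 0} => ⟪T y, y⟫ / ‖(y : E)‖ ^ 2) :=
    ⟨-‖LinearMap.toContinuousLinearMap T‖, by
      rintro _ ⟨y, rfl⟩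
      exact neg_le_of_abs_le ((LinearMap.toContinuousLinearMap T).rayleighQuotient_le_norm y)⟩
  rw [← le_div_iff₀ (by positivity)]
  exact ciInf_le hbdd ⟨v, hv⟩

namespace Matrix

variable {l m n p : Type*} [Fintype l] [Fintype m] [Fintype n] [Fintype p]

theorem PosSemidef.tsum {ι : Type*} {f : ι → Matrix n n ℝ} (hf : Summable f)
    (h : ∀ i, (f i).PosSemidef) : (∑' i, f i).PosSemidef := by
  refine .of_dotProduct_mulVec_nonneg ?_ fun x => ?_
  · exact conjTranspose_tsum.trans (tsum_congr fun i => (h i).1.eq)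
  let q : Matrix n n ℝ →+ ℝ :=
    { toFun := fun M => star x ⬝ᵥ M *ᵥ x
      map_zero' := by simp
      map_add' := fun M N => by simp [add_mulVec, dotProduct_add] }
  have hq : Continuous q :=
    continuous_const.dotProduct (continuous_id.matrix_mulVec continuous_const)
  exact (hf.hasSum.map q hq).nonneg fun i => (h i).dotProduct_mulVec_nonneg x

theorem PosSemidef.smul_transpose_mul_mul_self {X : Matrix n n ℝ} (hX : X.PosSemidef) {γ : ℝ}
    (hγ : 0 ≤ γ) (B : Matrix n m ℝ) : (γ • (Bᵀ * X * B)).PosSemidef :=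
  (by simpa using hX.conjTranspose_mul_mul_same B : (Bᵀ * X * B).PosSemidef).smul hγ

variable [DecidableEq m] [DecidableEq n] [DecidableEq p]

theorem l2_opNorm_transpose (M : Matrix m n ℝ) : ‖Mᵀ‖ = ‖M‖ := by
  rw [← conjTranspose_eq_transpose_of_trivial, l2_opNorm_conjTranspose]

theorem l2_opNorm_mul_mul_le (M : Matrix l m ℝ) (N : Matrix m n ℝ) (L : Matrix n p ℝ) :
    ‖M * N * L‖ ≤ ‖M‖ * ‖N‖ * ‖L‖ :=
  (l2_opNorm_mul _ _).trans (by gcongr; exact l2_opNorm_mul _ _)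

theorem l2_opNorm_pow_le (M : Matrix n n ℝ) : ∀ t : ℕ, ‖M ^ t‖ ≤ ‖M‖ ^ t
  | 0 => by
    rw [pow_zero, pow_zero, ← l2_opNorm_toEuclideanCLM, map_one]
    exact ContinuousLinearMap.norm_id_le
  | t + 1 => norm_pow_le' M t.succ_pos

theorem summable_smul_transpose_pow_mul_mul_pow {γ : ℝ} (hγ : 0 ≤ γ) {X : Matrix n n ℝ}
    (hX : γ * ‖X‖ ^ 2 < 1) (C : Matrix n n ℝ) :
    Summable fun t : ℕ => γ ^ t • ((Xᵀ) ^ t * C * X ^ t) := by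
  refine .of_norm_bounded ((summable_geometric_of_lt_one (by positivity) hX).mul_left ‖C‖)
    fun t => ?_
  have hXt : ‖(Xᵀ) ^ t‖ ≤ ‖X‖ ^ t := by
    simpa [← transpose_pow, l2_opNorm_transpose] using l2_opNorm_pow_le X t
  calc ‖γ ^ t • ((Xᵀ) ^ t * C * X ^ t)‖ ≤ γ ^ t * (‖(Xᵀ) ^ t‖ * ‖C‖ * ‖X ^ t‖) := by
        rw [norm_smul, Real.norm_of_nonneg (by positivity)]
        gcongr
        exact l2_opNorm_mul_mul_le _ _ _
    _ ≤ γ ^ t * (‖X‖ ^ t * ‖C‖ * ‖X‖ ^ t) := by gcongr; exact l2_opNorm_pow_le X t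
    _ = ‖C‖ * (γ * ‖X‖ ^ 2) ^ t := by ring

theorem l2_opNorm_transpose_mul_mul_sub_mul_le (B : Matrix m n ℝ) (X : Matrix m m ℝ)
    (A : Matrix m p ℝ) (K : Matrix n p ℝ) :
    ‖Bᵀ * X * (A - B * K)‖ ≤ ‖B‖ * ‖X‖ * (‖A‖ + ‖B‖ * ‖K‖) := by
  refine (l2_opNorm_mul_mul_le _ _ _).trans ?_
  rw [l2_opNorm_transpose]
  gcongr
  exact (norm_sub_le _ _).trans (by gcongr; exact l2_opNorm_mul _ _)

theorem l2_opNorm_sub_mul_mul_add_smul_mul_le {M N : Matrix m m ℝ} {c γ : ℝ} (hM : ‖M‖ ≤ c)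
    (hγ : 0 ≤ γ) (D G : Matrix m n ℝ) :
    ‖D - M * (N * D) + γ • (M * G)‖ ≤ (1 + ‖N‖ * c) * ‖D‖ + γ * c * ‖G‖ := by
  have hc : 0 ≤ c := (norm_nonneg _).trans hM
  calc _ ≤ ‖D‖ + ‖M‖ * (‖N‖ * ‖D‖) + γ * (‖M‖ * ‖G‖) := by
        refine (norm_add_le _ _).trans (add_le_add ((norm_sub_le _ _).trans ?_) ?_)
        · gcongr
          exact (l2_opNorm_mul _ _).trans (by gcongr; exact l2_opNorm_mul _ _)
        · rw [norm_smul, Real.norm_of_nonneg hγ]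
          gcongr
          exact l2_opNorm_mul _ _
    _ ≤ ‖D‖ + c * (‖N‖ * ‖D‖) + γ * (c * ‖G‖) := by gcongr
    _ = _ := by ring

section SigMin

variable {k : ℕ}

theorem PosSemidef.exists_eigenvector_sigMin (hk : 0 < k) {R : Matrix (Fin k) (Fin k) ℝ}
    (hR : R.PosSemidef) :
    ∃ x : EuclideanSpace ℝ (Fin k), ‖x‖ = 1 ∧ toEuclideanLin R x = sigMin R • x ∧
      ∀ v, sigMin R * ‖v‖ ^ 2 ≤ ⟪toEuclideanLin R v, v⟫ := by
  have : Nonempty (Fin k) := ⟨⟨0, hk⟩⟩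
  have hpos := isPositive_toEuclideanLin_iff.2 hR
  obtain ⟨μ, x, hx, hRx, hμ⟩ := hpos.isSymmetric.exists_eigenvector_mul_sq_norm_le_inner
  have hμ₀ : 0 ≤ μ := by
    simpa [hRx, real_inner_smul_left, hx] using hpos.re_inner_nonneg_left x
  have hσ : sigMin R = μ := by
    refine le_antisymm (csInf_le ⟨0, ?_⟩ ⟨x, hx, ?_⟩) (le_csInf ⟨_, x, hx, rfl⟩ ?_)
    · rintro _ ⟨y, -, rfl⟩
      exact norm_nonneg _
    · simp [hRx, norm_smul, hx, abs_of_nonneg hμ₀]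
    · rintro _ ⟨y, hy, rfl⟩
      simpa [hy] using (hμ y).trans (real_inner_le_norm _ _)
  exact ⟨x, hx, hσ ▸ hRx, hσ ▸ hμ⟩

theorem PosDef.sigMin_pos (hk : 0 < k) {R : Matrix (Fin k) (Fin k) ℝ} (hR : R.PosDef) :
    0 < sigMin R := by
  obtain ⟨x, hx, hRx, -⟩ := hR.posSemidef.exists_eigenvector_sigMin hk
  have hx₀ : x.ofLp ≠ 0 := by
    intro h; simp [show x = 0 from WithLp.ofLp_injective 2 h] at hx
  have := hR.dotProduct_mulVec_pos hx₀
  rw [star_trivial, ← inner_toEuclideanCLM] at this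
  change 0 < ⟪x, toEuclideanLin R x⟫ at this
  rwa [hRx, real_inner_smul_right, real_inner_self_eq_norm_sq, hx, one_pow, mul_one] at this

theorem PosSemidef.sigMin_mul_norm_le_norm_add_apply (hk : 0 < k) {R S : Matrix (Fin k) (Fin k) ℝ}
    (hR : R.PosSemidef) (hS : S.PosSemidef) (v : EuclideanSpace ℝ (Fin k)) :
    sigMin R * ‖v‖ ≤ ‖toEuclideanLin (R + S) v‖ := by
  rcases eq_or_ne v 0 with rfl | hv
  · simp
  obtain ⟨-, -, -, hσ⟩ := hR.exists_eigenvector_sigMin hk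
  have hSv : 0 ≤ ⟪toEuclideanLin S v, v⟫ :=
    (isPositive_toEuclideanLin_iff.2 hS).re_inner_nonneg_left v
  refine le_of_mul_le_mul_right ?_ (norm_pos_iff.2 hv)
  calc sigMin R * ‖v‖ * ‖v‖ ≤ ⟪toEuclideanLin R v, v⟫ + ⟪toEuclideanLin S v, v⟫ := by
        nlinarith [hσ v]
    _ = ⟪toEuclideanLin (R + S) v, v⟫ := by simp [inner_add_left]
    _ ≤ ‖toEuclideanLin (R + S) v‖ * ‖v‖ := real_inner_le_norm _ _

theorem PosDef.l2_opNorm_inv_add_le (hk : 0 < k) {R S : Matrix (Fin k) (Fin k) ℝ}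
    (hR : R.PosDef) (hS : S.PosSemidef) : ‖(R + S)⁻¹‖ ≤ (sigMin R)⁻¹ := by
  have hσ := hR.sigMin_pos hk
  have hdet : IsUnit (R + S).det := (isUnit_iff_isUnit_det _).1 (hR.add_posSemidef hS).isUnit
  refine ContinuousLinearMap.opNorm_le_bound _ (inv_nonneg.2 hσ.le) fun y => ?_
  rw [inv_mul_eq_div, le_div_iff₀' hσ]
  calc sigMin R * ‖toEuclideanLin (R + S)⁻¹ y‖
      ≤ ‖toEuclideanLin (R + S) (toEuclideanLin (R + S)⁻¹ y)‖ :=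
        hR.posSemidef.sigMin_mul_norm_le_norm_add_apply hk hS _
    _ = ‖y‖ := by
        change ‖toEuclideanCLM (𝕜 := ℝ) (R + S) (toEuclideanCLM (𝕜 := ℝ) (R + S)⁻¹ y)‖ = ‖y‖
        rw [← mul_apply_eq_comp, ← map_mul, mul_nonsing_inv _ hdet, map_one, one_apply_eq_self]

end SigMin

end Matrix

theorem Pmat_posSemidef {n k : ℕ} {γ : ℝ} (hγ : 0 < γ) {A : Matrix (Fin n) (Fin n) ℝ}
    {B : Matrix (Fin n) (Fin k) ℝ} {Q : Matrix (Fin n) (Fin n) ℝ} {R : Matrix (Fin k) (Fin k) ℝ}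
    {K : Matrix (Fin k) (Fin n) ℝ} (hQ : Q.PosSemidef) (hR : R.PosSemidef)
    (hK : spec (A - B * K) < 1 / √γ) : (Pmat γ A B Q R K).PosSemidef := by
  have hC : (Q + Kᵀ * R * K).PosSemidef :=
    hQ.add (by simpa using hR.conjTranspose_mul_mul_same K)
  refine .tsum (summable_smul_transpose_pow_mul_mul_pow hγ.le
    (mul_sq_lt_one_of_lt_one_div_sqrt hγ (norm_nonneg _) hK) _) fun t => .smul ?_ (by positivity)
  simpa [transpose_pow] using hC.conjTranspose_mul_mul_same ((A - B * K) ^ t)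

theorem Emat_eq_of_mul_eq {n k : ℕ} {γ : ℝ} {A : Matrix (Fin n) (Fin n) ℝ}
    {B : Matrix (Fin n) (Fin k) ℝ} {Q : Matrix (Fin n) (Fin n) ℝ} {R : Matrix (Fin k) (Fin k) ℝ}
    {K Kstar : Matrix (Fin k) (Fin n) ℝ} {Ps : Matrix (Fin n) (Fin n) ℝ}
    (hfix : (R + γ • (Bᵀ * Ps * B)) * Kstar = γ • (Bᵀ * Ps * A)) :
    Emat γ A B Q R K = (R + γ • (Bᵀ * Ps * B)) * (K - Kstar) -
      γ • (Bᵀ * (Pmat γ A B Q R K - Ps) * (A - B * K)) := by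
  rw [Emat, Matrix.mul_sub _ K Kstar, hfix]
  simp only [Matrix.mul_sub, Matrix.sub_mul, Matrix.add_mul, Matrix.smul_mul, Matrix.mul_assoc,
    smul_sub]
  abel

theorem stmt14_general (n k : ℕ) (hk : 0 < k)
    (γ : ℝ) (hγ0 : 0 < γ)
    (A : Matrix (Fin n) (Fin n) ℝ) (B : Matrix (Fin n) (Fin k) ℝ)
    (Q : Matrix (Fin n) (Fin n) ℝ) (hQ : Q.PosSemidef)
    (R : Matrix (Fin k) (Fin k) ℝ) (hR : R.PosDef)
    (Kstar : Matrix (Fin k) (Fin n) ℝ)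
    (hKstar : spec (A - B * Kstar) < 1 / Real.sqrt γ)
    (hfix : Kstar =
      γ • ((R + γ • (Bᵀ * Pmat γ A B Q R Kstar * B))⁻¹ * (Bᵀ * Pmat γ A B Q R Kstar * A)))
    (K : Matrix (Fin k) (Fin n) ℝ) (hK : spec (A - B * K) < 1 / Real.sqrt γ)
    (K' : Matrix (Fin k) (Fin n) ℝ)
    (hK'def : K' = K - (R + γ • (Bᵀ * Pmat γ A B Q R K * B))⁻¹ * Emat γ A B Q R K) :
    spec (K' - Kstar) ≤
      (1 + spec (γ • (Bᵀ * Pmat γ A B Q R Kstar * B) + R) / sigMin R) * spec (K - Kstar) +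
      (γ / sigMin R) * (spec B * spec A + spec B ^ 2 * spec K) *
        spec (Pmat γ A B Q R K - Pmat γ A B Q R Kstar) := by
  set P := Pmat γ A B Q R K
  set Ps := Pmat γ A B Q R Kstar
  set Ms := R + γ • (Bᵀ * Ps * B)
  set Mi := (R + γ • (Bᵀ * P * B))⁻¹
  have hMs : Ms * Kstar = γ • (Bᵀ * Ps * A) := by
    have hMs_posDef : Ms.PosDef := hR.add_posSemidef
      ((Pmat_posSemidef hγ0 hQ hR.posSemidef hKstar).smul_transpose_mul_mul_self hγ0.le B)
    conv_lhs => rw [hfix]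
    rw [Matrix.mul_smul,
      mul_nonsing_inv_cancel_left _ _ ((isUnit_iff_isUnit_det _).1 hMs_posDef.isUnit)]
  have hK' : K' - Kstar = (K - Kstar) - Mi * (Ms * (K - Kstar)) +
      γ • (Mi * (Bᵀ * (P - Ps) * (A - B * K))) := by
    rw [hK'def, Emat_eq_of_mul_eq hMs, Matrix.mul_sub, Matrix.mul_smul]
    abel
  have hMi : ‖Mi‖ ≤ (sigMin R)⁻¹ := hR.l2_opNorm_inv_add_le hk
    ((Pmat_posSemidef hγ0 hQ hR.posSemidef hK).smul_transpose_mul_mul_self hγ0.le B)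
  have hσ : 0 < sigMin R := hR.sigMin_pos hk
  simp only [spec_eq_norm]
  rw [hK', add_comm _ R]
  calc _ ≤ (1 + ‖Ms‖ * (sigMin R)⁻¹) * ‖K - Kstar‖ +
        γ * (sigMin R)⁻¹ * ‖Bᵀ * (P - Ps) * (A - B * K)‖ :=
        l2_opNorm_sub_mul_mul_add_smul_mul_le hMi hγ0.le _ _
    _ ≤ (1 + ‖Ms‖ * (sigMin R)⁻¹) * ‖K - Kstar‖ +
        γ * (sigMin R)⁻¹ * (‖B‖ * ‖P - Ps‖ * (‖A‖ + ‖B‖ * ‖K‖)) := by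
        gcongr
        exact l2_opNorm_transpose_mul_mul_sub_mul_le _ _ _ _
    _ = _ := by ring

/-- Bound on the one-step gain update of IPO. -/
theorem stmt14 (n k : ℕ) (hn : 0 < n) (hk : 0 < k)
    (γ : ℝ) (hγ0 : 0 < γ) (hγ1 : γ < 1)
    (A : Matrix (Fin n) (Fin n) ℝ) (B : Matrix (Fin n) (Fin k) ℝ)
    (Q : Matrix (Fin n) (Fin n) ℝ) (hQ : Q.PosSemidef)
    (R : Matrix (Fin k) (Fin k) ℝ) (hR : R.PosDef)
    (Kstar : Matrix (Fin k) (Fin n) ℝ)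
    (hKstar : spec (A - B * Kstar) < 1 / Real.sqrt γ)
    (hfix : Kstar =
      γ • ((R + γ • (Bᵀ * Pmat γ A B Q R Kstar * B))⁻¹ * (Bᵀ * Pmat γ A B Q R Kstar * A)))
    (K : Matrix (Fin k) (Fin n) ℝ) (hK : spec (A - B * K) < 1 / Real.sqrt γ)
    (K' : Matrix (Fin k) (Fin n) ℝ)
    (hK'def : K' = K - (R + γ • (Bᵀ * Pmat γ A B Q R K * B))⁻¹ * Emat γ A B Q R K) :
    spec (K' - Kstar) ≤
      (1 + spec (γ • (Bᵀ * Pmat γ A B Q R Kstar * B) + R) / sigMin R) * spec (K - Kstar) +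
      (γ / sigMin R) * (spec B * spec A + spec B ^ 2 * spec K) *
        spec (Pmat γ A B Q R K - Pmat γ A B Q R Kstar) :=
  stmt14_general n k hk γ hγ0 A B Q hQ R hR Kstar hKstar hfix K hK K' hK'def
end
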